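/- Let H be a Hopf algebra with bijective antipode S, and M a left H-module and left H-comodule satisfying the anti-Yetter-Drinfeld condition Δ_M(h·m) = h⁽¹⁾m⁽⁻¹⁾S⁻¹(h⁽³⁾) ⊗ h⁽²⁾m⁽⁰⁾. Then the map M → M, m ↦ m⁽⁻¹⁾·m⁽⁰⁾ (action composed with coaction) is a homomorphism of left H-modules. -/

import Mathlib

/-!
By the anti-Yetter-Drinfeld condition, `(h·m)⁽⁻¹⁾·(h·m)⁽⁰⁾ = h⁽¹⁾m⁽⁻¹⁾S⁻¹(h⁽³⁾)h⁽²⁾·m⁽⁰⁾`.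
Applying the antimultiplicative, injective antipode turns `S⁻¹(h⁽³⁾)h⁽²⁾` into
`S(h⁽²⁾)h⁽³⁾ = ε(h⁽²⁾)`, and the counit then collapses `h⁽¹⁾ε(h⁽²⁾)` to `h`, leaving
`h·(m⁽⁻¹⁾·m⁽⁰⁾)`.
-/

open TensorProduct LinearMap Coalgebra

noncomputable section

variable (k : Type) [Field k] (H : Type) [Ring H] [HopfAlgebra k H]
variable (M : Type) [AddCommGroup M] [Module k M]

/-- The right-hand side `h⁽¹⁾m⁽⁻¹⁾S⁻¹(h⁽³⁾) ⊗ h⁽²⁾m⁽⁰⁾` of the left-left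
anti-Yetter-Drinfeld condition, as a linear map `H ⊗ M → H ⊗ M`, where `Sinv` plays
the role of the inverse of the antipode. -/
def aydRHSll (Sinv : H →ₗ[k] H) (act : H ⊗[k] M →ₗ[k] M)
    (coact : M →ₗ[k] H ⊗[k] M) : H ⊗[k] M →ₗ[k] H ⊗[k] M :=
  map (mul' k H ∘ₗ map (mul' k H) Sinv) act
    ∘ₗ (TensorProduct.assoc k (H ⊗[k] H) H (H ⊗[k] M)).symm.toLinearMap
    ∘ₗ map LinearMap.id
        ((TensorProduct.leftComm k H H M).toLinearMap
          ∘ₗ (TensorProduct.assoc k H H M).toLinearMap)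
    ∘ₗ (tensorTensorTensorComm k H (H ⊗[k] H) H M).toLinearMap
    ∘ₗ map (map LinearMap.id comul ∘ₗ comul) coact

/-- The left-left anti-Yetter-Drinfeld condition:
`Δ_M(h·m) = h⁽¹⁾m⁽⁻¹⁾S⁻¹(h⁽³⁾) ⊗ h⁽²⁾m⁽⁰⁾`. -/
def IsAYDll (Sinv : H →ₗ[k] H) (act : H ⊗[k] M →ₗ[k] M)
    (coact : M →ₗ[k] H ⊗[k] M) : Prop :=
  coact ∘ₗ act = aydRHSll k H M Sinv act coact

namespace Coalgebra

variable {R A ι : Type*} [CommSemiring R] [AddCommMonoid A] [Module R A] [Coalgebra R A]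

lemma sum_counit_right_smul {a : A} (r : Repr R a ι) :
    ∑ i ∈ r.index, counit (R := R) (r.right i) • r.left i = a := by
  simpa only [map_sum, _root_.TensorProduct.rid_tmul, one_smul]
    using congr(_root_.TensorProduct.rid R A $(sum_tmul_counit_eq r))

end Coalgebra

namespace HopfAlgebra

variable {R A ι : Type*} [CommSemiring R] [Semiring A] [HopfAlgebra R A]

lemma sum_antipodeInv_mul_eq_smul (Sinv : A →ₗ[R] A)
    (hS1 : Sinv ∘ₗ antipode R = LinearMap.id) (hS2 : antipode R ∘ₗ Sinv = LinearMap.id)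
    {a : A} (r : Repr R a ι) :
    ∑ i ∈ r.index, Sinv (r.right i) * r.left i = counit (R := R) a • 1 := by
  apply Function.LeftInverse.injective (g := Sinv) (LinearMap.congr_fun hS1)
  simp only [map_sum, map_smul, antipode_mul_antidistrib, antipode_one]
  simp only [← LinearMap.comp_apply, hS2, LinearMap.id_apply]
  exact sum_antipode_mul_eq_smul r

end HopfAlgebra

section

variable {k H M}

/-- `(a ⊗ b ⊗ c) ⊗ (h ⊗ n) ↦ a h S⁻¹(c) ⊗ b·n`, so that `aydRHSll` is this map after `Δ² ⊗ Δ_M`. -/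
def aydTwistedAction (Sinv : H →ₗ[k] H) (act : H ⊗[k] M →ₗ[k] M) :
    (H ⊗[k] (H ⊗[k] H)) ⊗[k] (H ⊗[k] M) →ₗ[k] H ⊗[k] M :=
  map (mul' k H ∘ₗ map (mul' k H) Sinv) act
    ∘ₗ (TensorProduct.assoc k (H ⊗[k] H) H (H ⊗[k] M)).symm.toLinearMap
    ∘ₗ map LinearMap.id
        ((TensorProduct.leftComm k H H M).toLinearMap
          ∘ₗ (TensorProduct.assoc k H H M).toLinearMap)
    ∘ₗ (tensorTensorTensorComm k H (H ⊗[k] H) H M).toLinearMap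

lemma aydRHSll_eq_aydTwistedAction_comp (Sinv : H →ₗ[k] H) (act : H ⊗[k] M →ₗ[k] M)
    (coact : M →ₗ[k] H ⊗[k] M) :
    aydRHSll k H M Sinv act coact =
      aydTwistedAction Sinv act ∘ₗ map (map LinearMap.id comul ∘ₗ comul) LinearMap.id
        ∘ₗ map LinearMap.id coact := by
  rw [aydRHSll, aydTwistedAction, ← map_comp]
  rfl

@[simp]
lemma aydTwistedAction_tmul (Sinv : H →ₗ[k] H) (act : H ⊗[k] M →ₗ[k] M) (a b c h : H) (n : M) :
    aydTwistedAction Sinv act ((a ⊗ₜ (b ⊗ₜ c)) ⊗ₜ (h ⊗ₜ n)) =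
      (a * h * Sinv c) ⊗ₜ act (b ⊗ₜ n) := by
  simp [aydTwistedAction]

lemma act_comp_aydTwistedAction_comp_comul (Sinv : H →ₗ[k] H)
    (hS1 : Sinv ∘ₗ HopfAlgebra.antipode k = LinearMap.id)
    (hS2 : HopfAlgebra.antipode k ∘ₗ Sinv = LinearMap.id)
    (act : H ⊗[k] M →ₗ[k] M) (hact_one : ∀ m : M, act ((1 : H) ⊗ₜ[k] m) = m)
    (hact_mul : ∀ (g h : H) (m : M), act ((g * h) ⊗ₜ[k] m) = act (g ⊗ₜ[k] act (h ⊗ₜ[k] m))) :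
    act ∘ₗ aydTwistedAction Sinv act ∘ₗ map (map LinearMap.id comul ∘ₗ comul) LinearMap.id =
      act ∘ₗ map LinearMap.id act := by
  ext x h n
  let r := ℛ k x
  let r₂ := fun i => ℛ k (r.right i)
  -- `a ↦ x' · h · a · n` for a fixed left factor `x'` of `Δ x`
  let ρ (x' : H) : H →ₗ[k] M :=
    act ∘ₗ TensorProduct.mk k H M x' ∘ₗ act ∘ₗ TensorProduct.mk k H M h ∘ₗ act ∘ₗ
      (TensorProduct.mk k H M).flip n
  have hcomul2 : map LinearMap.id comul (comul x) =
      ∑ i ∈ r.index, ∑ p ∈ (r₂ i).index, r.left i ⊗ₜ[k] ((r₂ i).left p ⊗ₜ[k] (r₂ i).right p) := by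
    simp only [← r.eq, ← (r₂ _).eq, map_sum, map_tmul, LinearMap.id_apply, tmul_sum]
  calc act (aydTwistedAction Sinv act (map (map LinearMap.id comul ∘ₗ comul) LinearMap.id
          (x ⊗ₜ (h ⊗ₜ n))))
      = ∑ i ∈ r.index,
          ρ (r.left i) (∑ p ∈ (r₂ i).index, Sinv ((r₂ i).right p) * (r₂ i).left p) := by
        simp only [map_tmul, LinearMap.comp_apply, LinearMap.id_apply, hcomul2, sum_tmul, map_sum,
          aydTwistedAction_tmul, hact_mul, ρ, TensorProduct.mk_apply, LinearMap.flip_apply]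
    _ = ∑ i ∈ r.index, counit (R := k) (r.right i) • ρ (r.left i) 1 := by
        simp only [HopfAlgebra.sum_antipodeInv_mul_eq_smul Sinv hS1 hS2, map_smul]
    _ = act ((∑ i ∈ r.index, counit (R := k) (r.right i) • r.left i) ⊗ₜ act (h ⊗ₜ n)) := by
        simp only [ρ, LinearMap.comp_apply, TensorProduct.mk_apply, LinearMap.flip_apply, hact_one,
          ← map_smul, smul_tmul', ← map_sum, ← sum_tmul]
    _ = act (x ⊗ₜ act (h ⊗ₜ n)) := by rw [Coalgebra.sum_counit_right_smul]

end

theorem statement0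
    (Sinv : H →ₗ[k] H)
    (hS1 : Sinv ∘ₗ HopfAlgebra.antipode (R := k) = LinearMap.id)
    (hS2 : HopfAlgebra.antipode (R := k) ∘ₗ Sinv = LinearMap.id)
    (act : H ⊗[k] M →ₗ[k] M)
    (hact_one : ∀ m : M, act ((1 : H) ⊗ₜ[k] m) = m)
    (hact_mul : ∀ (g h : H) (m : M),
      act ((g * h) ⊗ₜ[k] m) = act (g ⊗ₜ[k] act (h ⊗ₜ[k] m)))
    (coact : M →ₗ[k] H ⊗[k] M)
    (hayd : IsAYDll k H M Sinv act coact) :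
    -- `m ↦ m⁽⁻¹⁾·m⁽⁰⁾` is a homomorphism of left `H`-modules
    (act ∘ₗ coact) ∘ₗ act = act ∘ₗ map LinearMap.id (act ∘ₗ coact) := by
  unfold IsAYDll at hayd
  calc (act ∘ₗ coact) ∘ₗ act
      = (act ∘ₗ aydTwistedAction Sinv act ∘ₗ map (map LinearMap.id comul ∘ₗ comul) LinearMap.id)
          ∘ₗ map LinearMap.id coact := by
        rw [LinearMap.comp_assoc, hayd, aydRHSll_eq_aydTwistedAction_comp]
        rfl
    _ = (act ∘ₗ map LinearMap.id act) ∘ₗ map LinearMap.id coact := by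
        rw [act_comp_aydTwistedAction_comp_comul Sinv hS1 hS2 act hact_one hact_mul]
    _ = act ∘ₗ map LinearMap.id (act ∘ₗ coact) := by
        rw [LinearMap.comp_assoc, ← map_comp, LinearMap.id_comp]
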